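/- For every tree T with |T| = n, the set S_T is nonempty; equivalently, the map φ from S_n to the set of trees with n internal vertices is surjective. -/

import Mathlib

lemma foldr_min_mem (a : ℤ) : ∀ l : List ℤ, l.foldr min a ∈ a :: l := by
  intro l
  induction l with
  | nil => simp
  | cons b l ih =>
    simp only [List.foldr_cons]
    rcases min_choice b (l.foldr min a) with h | h
    · rw [h]; simp
    · rw [h]
      rcases List.mem_cons.mp ih with h' | h'
      · simp [h']
      · simp [h']

/-- The planar binary tree `φ(I)` associated to a list `I` of (distinct) integers:
`φ` of the empty list is the empty tree `|`, and `φ(I) = φ(I₁) ∨ φ(I₂)` where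
`I = I₁ · (min I) · I₂` is the splitting of `I` at its minimal entry. -/
def phi : List ℤ → Tree Unit
  | [] => Tree.nil
  | a :: l =>
    Tree.node ()
      (phi ((a :: l).take ((a :: l).idxOf (l.foldr min a))))
      (phi ((a :: l).drop ((a :: l).idxOf (l.foldr min a) + 1)))
termination_by l => l.length
decreasing_by
  · have hm := foldr_min_mem a l
    have hk := List.idxOf_lt_length_iff.mpr hm
    simp only [List.length_take, List.length_cons, List.foldr_attach] at *
    omega
  · simp only [List.length_drop, List.length_cons]
    omega

/-- The standardization of a list `I` of distinct integers: the list whose `j`-th entry is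
the (1-indexed) position of `I_j` in the increasing ordering of the entries of `I`. -/
def stdz (I : List ℤ) : List ℤ :=
  I.map (fun x => ((I.filter (fun y => y < x)).length : ℤ) + 1)

/-- `l` is (the list of values of) a permutation of `{1, …, n}`. -/
def IsPermList (n : ℕ) (l : List ℤ) : Prop :=
  l.Perm ((List.range n).map (fun k => (k : ℤ) + 1))

/-- `S_T`: the set of permutations `σ ∈ S_{|T|}` (identified with their lists of values
`(σ(1),…,σ(n))`) such that `φ(σ) = T`. -/
def STree (T : Tree Unit) : Set (List ℤ) :=
  {l | IsPermList T.numNodes l ∧ phi l = T}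

/-!
Label the nodes of `T` in preorder by `1, …, n` and read the labels in inorder (left subtree,
root, right subtree). Each node's label is smaller than all labels of its subtrees, so the root's
label is the minimum of the word and separates the words of the two subtrees; by induction `φ`
of that word is `T`, and the word is a permutation of `1, …, n`.
-/

lemma foldr_min_le {α : Type*} [LinearOrder α] {a x : α} {t : List α} (hx : x ∈ a :: t) : t.foldr min a ≤ x := by
  induction t generalizing x with
  | nil => simp_all
  | cons b t ih =>
    rw [List.foldr_cons]
    rcases List.mem_cons.mp hx with rfl | hx
    · exact (min_le_right _ _).trans (ih List.mem_cons_self)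
    rcases List.mem_cons.mp hx with rfl | hx
    · exact min_le_left _ _
    · exact (min_le_right _ _).trans (ih (List.mem_cons_of_mem a hx))

lemma foldr_min_eq {a m : ℤ} {t : List ℤ} (hm : m ∈ a :: t) (hle : ∀ x ∈ a :: t, m ≤ x) :
    t.foldr min a = m :=
  le_antisymm (foldr_min_le hm) (hle _ (foldr_min_mem a t))

lemma phi_append_cons {A B : List ℤ} {m : ℤ} (hA : ∀ x ∈ A, m < x) (hB : ∀ x ∈ B, m < x) :
    phi (A ++ m :: B) = .node () (phi A) (phi B) := by
  obtain ⟨a, t, ht⟩ : ∃ a t, A ++ m :: B = a :: t := by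
    cases A with
    | nil => exact ⟨m, B, rfl⟩
    | cons a A => exact ⟨a, A ++ m :: B, rfl⟩
  have hmin : t.foldr min a = m := by
    refine foldr_min_eq (ht ▸ by simp) fun x hx => ?_
    rw [← ht, List.mem_append, List.mem_cons] at hx
    rcases hx with hx | rfl | hx
    exacts [(hA x hx).le, le_rfl, (hB x hx).le]
  have hidx : (A ++ m :: B).idxOf m = A.length := by
    rw [List.idxOf_append_of_notMem fun h => (hA m h).false, List.idxOf_cons_self, add_zero]
  rw [ht, phi, ← ht, hmin, hidx, List.take_left' rfl, List.append_cons,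
    List.drop_left' (by simp)]

def preorderWord {α : Type*} : ℕ → BinaryTree α → List ℕ
  | _, .nil => []
  | c, .node _ L R => preorderWord (c + 1) L ++ c :: preorderWord (c + 1 + L.numNodes) R

lemma preorderWord_perm {α : Type*} : ∀ (c : ℕ) (T : BinaryTree α),
    (preorderWord c T).Perm (List.range' c T.numNodes)
  | _, .nil => .nil
  | c, .node _ L R => by
    rw [preorderWord, BinaryTree.numNodes, List.range'_succ, ← List.range'_append, one_mul]
    exact List.perm_middle.trans
      (.cons c ((preorderWord_perm (c + 1) L).append (preorderWord_perm (c + 1 + L.numNodes) R)))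

lemma le_of_mem_preorderWord {α : Type*} {c x : ℕ} {T : BinaryTree α}
    (hx : x ∈ preorderWord c T) : c ≤ x :=
  (List.mem_range'_1.mp ((preorderWord_perm c T).subset hx)).1

lemma phi_preorderWord (c : ℕ) (T : BinaryTree Unit) :
    phi ((preorderWord c T).map (↑)) = T := by
  induction T generalizing c with
  | nil => simp [preorderWord, phi]
  | node _ L R ihL ihR =>
    have lt_of_mem {d : ℕ} {S : BinaryTree Unit} (hd : c < d) :
        ∀ x ∈ (preorderWord d S).map ((↑) : ℕ → ℤ), (c : ℤ) < x := by
      simp only [List.mem_map, forall_exists_index, and_imp, forall_apply_eq_imp_iff₂]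
      exact fun y hy => by exact_mod_cast hd.trans_le (le_of_mem_preorderWord hy)
    rw [preorderWord, List.map_append, List.map_cons,
      phi_append_cons (lt_of_mem (by omega)) (lt_of_mem (by omega)), ihL, ihR]

lemma isPermList_iff {n : ℕ} {l : List ℤ} :
    IsPermList n l ↔ l.Perm ((List.range' 1 n).map (↑)) := by
  simp only [IsPermList, List.range'_eq_map_range, bind_pure_comp, List.map_eq_map, List.map_map]
  congr! 2
  funext k
  simp [add_comm]

/-- For every tree `T`, the set `S_T` is nonempty; equivalently, the map `φ` from
permutations (of the appropriate order) to trees is surjective. -/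
theorem STree_nonempty (T : Tree Unit) : (STree T).Nonempty :=
  ⟨(preorderWord 1 T).map (↑), isPermList_iff.mpr ((preorderWord_perm 1 T).map _),
    phi_preorderWord 1 T⟩
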